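/- Let G be a finite Abelian p-group with sorted basis {Q_1,...,Q_N}, and suppose {P_1,...,P_N} is another sorted basis. Let K_1 = q_1 Q_1 + ... + q_N Q_N and K_2 = m_1 P_1 + ... + m_N P_N be primitive elements with |K_1| = p^e. Let k be the largest index with p not dividing q_k and l the largest index with p not dividing m_l. If nu_p(p^j K_1) = nu_p(p^j K_2) for all 0 <= j <= e, then |Q_k| = |P_l|. -/

import Mathlib

/-- A basis of a finite abelian group: every element has a unique representation
`∑ i, b i • Q i` with `0 ≤ b i < |Q i|`. -/
def IsBasis {G : Type*} [AddCommGroup G] {ι : Type*} [Fintype ι] (Q : ι → G) : Prop :=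
  ∀ g : G, ∃! b : ι → ℕ,
    (∀ i, b i < addOrderOf (Q i)) ∧ g = ∑ i, b i • Q i

/-- `K` is primitive w.r.t. the basis `Q` if, writing `K = ∑ i, q i • Q i` with coefficients
in canonical range, `p` does not divide some coefficient `q i`. -/
def IsPrimitive (p : ℕ) {G : Type*} [AddCommGroup G] {ι : Type*} [Fintype ι]
    (Q : ι → G) (K : G) : Prop :=
  ∃ q : ι → ℕ, (∀ i, q i < addOrderOf (Q i)) ∧ K = ∑ i, q i • Q i ∧ ∃ i, ¬ p ∣ q i

/-- The valuation `ν_p` of `K` relative to the basis `Q`: the largest `r` such that `p ^ r`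
divides all the (canonical) coefficients of `K`, with `ν_p 0 = ∞`. -/
noncomputable def nuP (p : ℕ) {G : Type*} [AddCommGroup G] {ι : Type*} [Fintype ι]
    (Q : ι → G) (K : G) : ℕ∞ :=
  sSup (((↑) : ℕ → ℕ∞) '' {r : ℕ | ∀ q : ι → ℕ,
    ((∀ i, q i < addOrderOf (Q i)) ∧ K = ∑ i, q i • Q i) → ∀ i, p ^ r ∣ q i})

/-!
Write `|Q k| = p ^ A`. For `j < A` the `k`-th canonical coefficient `p ^ j q_k mod p ^ A` of
`p ^ j K` is exactly divisible by `p ^ j`, so `ν_p (p ^ j K) = j`. For `j ≥ A` the coefficients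
of index `i ≤ k` vanish because the basis is sorted, and those of index `i > k` are divisible by
`p ^ (j + 1)` because `p ∣ q_i`; so `ν_p (p ^ j K) > j`. Hence `A` is determined by the function
`j ↦ ν_p (p ^ j K)` as the least `j` with `ν_p (p ^ j K) ≠ j`, and `A ≤ e` since `p ^ e K₁ = 0`.
Finally `ν_p (g)` is the largest `r` with `g ∈ p ^ r G`, which does not depend on the basis.
-/

theorem Nat.pow_dvd_mod_pow_of_dvd {p r a n : ℕ} (hr : p ^ r ∣ n) : p ^ r ∣ n % p ^ a := by
  rcases le_or_gt r a with h | h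
  · exact (Nat.dvd_mod_iff (pow_dvd_pow p h)).mpr hr
  · rw [Nat.mod_eq_zero_of_dvd ((pow_dvd_pow p h.le).trans hr)]
    exact dvd_zero _

theorem Nat.not_pow_succ_dvd_pow_mul_mod {p j a c : ℕ} (hp : p.Prime) (hja : j < a)
    (hc : ¬ p ∣ c) : ¬ p ^ (j + 1) ∣ p ^ j * c % p ^ a := by
  rw [Nat.dvd_mod_iff (pow_dvd_pow p hja), pow_succ,
    Nat.mul_dvd_mul_iff_left (pow_pos hp.pos j)]
  exact hc

section

variable {G : Type*} [AddCommGroup G] {ι : Type*} [Fintype ι] {p : ℕ} {Q : ι → G}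

def IsCanonicalRepr (Q : ι → G) (g : G) (b : ι → ℕ) : Prop :=
  (∀ i, b i < addOrderOf (Q i)) ∧ g = ∑ i, b i • Q i

namespace IsBasis

variable (hQ : IsBasis Q)
include hQ

theorem exists_repr (g : G) : ∃ b, IsCanonicalRepr Q g b :=
  (hQ g).exists

theorem repr_unique {g : G} {b c : ι → ℕ} (hb : IsCanonicalRepr Q g b)
    (hc : IsCanonicalRepr Q g c) : b = c :=
  (hQ g).unique hb hc

theorem addOrderOf_pos (i : ι) : 0 < addOrderOf (Q i) :=
  let ⟨_, hb, _⟩ := hQ.exists_repr 0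
  (Nat.zero_le _).trans_lt (hb i)

theorem isCanonicalRepr_nsmul {g : G} {b : ι → ℕ} (hg : g = ∑ i, b i • Q i) (n : ℕ) :
    IsCanonicalRepr Q (n • g) fun i => n * b i % addOrderOf (Q i) := by
  refine ⟨fun i => Nat.mod_lt _ (hQ.addOrderOf_pos i), ?_⟩
  rw [hg, Finset.smul_sum]
  refine Finset.sum_congr rfl fun i _ => ?_
  rw [mod_addOrderOf_nsmul, smul_smul]

theorem le_nuP_of_forall_dvd {g : G} {b : ι → ℕ} (hb : IsCanonicalRepr Q g b) {r : ℕ}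
    (h : ∀ i, p ^ r ∣ b i) : (r : ℕ∞) ≤ nuP p Q g :=
  le_sSup ⟨r, fun _ hc i => hQ.repr_unique hb hc ▸ h i, rfl⟩

theorem nuP_zero : nuP p Q 0 = ⊤ :=
  ENat.eq_top_iff_forall_ge.mpr fun _ =>
    hQ.le_nuP_of_forall_dvd ⟨fun i => hQ.addOrderOf_pos i, by simp⟩ fun _ => dvd_zero _

theorem forall_pow_dvd_iff (hQp : ∀ i, ∃ a, addOrderOf (Q i) = p ^ a) {g : G} {b : ι → ℕ}
    (hb : IsCanonicalRepr Q g b) (r : ℕ) : (∀ i, p ^ r ∣ b i) ↔ ∃ h : G, g = p ^ r • h := by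
  constructor
  · intro hdvd
    refine ⟨∑ i, (b i / p ^ r) • Q i, ?_⟩
    rw [hb.2, Finset.smul_sum]
    refine Finset.sum_congr rfl fun i _ => ?_
    rw [smul_smul, Nat.mul_div_cancel' (hdvd i)]
  · rintro ⟨h, rfl⟩ i
    obtain ⟨_, -, hc⟩ := hQ.exists_repr h
    rw [hQ.repr_unique hb (hQ.isCanonicalRepr_nsmul hc _)]
    obtain ⟨a, ha⟩ := hQp i
    simp only [ha]
    exact Nat.pow_dvd_mod_pow_of_dvd (dvd_mul_right _ _)

theorem nuP_eq_sSup (hQp : ∀ i, ∃ a, addOrderOf (Q i) = p ^ a) (g : G) :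
    nuP p Q g = sSup (((↑) : ℕ → ℕ∞) '' {r : ℕ | ∃ h : G, g = p ^ r • h}) := by
  obtain ⟨b, hb⟩ := hQ.exists_repr g
  refine congrArg (fun s : Set ℕ => sSup (((↑) : ℕ → ℕ∞) '' s)) (Set.ext fun r => ?_)
  rw [Set.mem_ofPred_eq, Set.mem_ofPred_eq, ← hQ.forall_pow_dvd_iff hQp hb]
  exact ⟨fun h => h b hb, fun h c hc => hQ.repr_unique hb hc ▸ h⟩

end IsBasis

theorem nuP_le_of_not_dvd {g : G} {b : ι → ℕ} (hb : IsCanonicalRepr Q g b) {r : ℕ} (i : ι)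
    (h : ¬ p ^ (r + 1) ∣ b i) : nuP p Q g ≤ r := by
  refine sSup_le ?_
  rintro _ ⟨s, hs, rfl⟩
  by_contra! hlt
  exact h ((pow_dvd_pow p (by exact_mod_cast hlt)).trans (hs b hb i))

theorem IsBasis.nuP_eq_nuP {P : ι → G} (hQ : IsBasis Q) (hP : IsBasis P)
    (hQp : ∀ i, ∃ a, addOrderOf (Q i) = p ^ a) (hPp : ∀ i, ∃ a, addOrderOf (P i) = p ^ a)
    (g : G) : nuP p Q g = nuP p P g := by
  rw [hQ.nuP_eq_sSup hQp, hP.nuP_eq_sSup hPp]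

section LastUnitCoefficient

variable {K : G} {q : ι → ℕ} {k : ι} {A : ℕ}

theorem IsBasis.nuP_pow_nsmul_of_lt (hp : p.Prime) (hQ : IsBasis Q)
    (hQp : ∀ i, ∃ a, addOrderOf (Q i) = p ^ a) (hK : K = ∑ i, q i • Q i) (hk : ¬ p ∣ q k)
    (hA : addOrderOf (Q k) = p ^ A) {j : ℕ} (hjA : j < A) : nuP p Q (p ^ j • K) = j := by
  have hrepr := hQ.isCanonicalRepr_nsmul hK (p ^ j)
  refine le_antisymm (nuP_le_of_not_dvd hrepr k ?_) (hQ.le_nuP_of_forall_dvd hrepr fun i => ?_)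
  · simp only [hA]
    exact Nat.not_pow_succ_dvd_pow_mul_mod hp hjA hk
  · obtain ⟨a, ha⟩ := hQp i
    simp only [ha]
    exact Nat.pow_dvd_mod_pow_of_dvd (dvd_mul_right _ _)

theorem IsBasis.lt_nuP_pow_nsmul_of_le [LinearOrder ι] (hp : p.Prime) (hQ : IsBasis Q)
    (hQp : ∀ i, ∃ a, addOrderOf (Q i) = p ^ a) (hQsorted : Monotone fun i => addOrderOf (Q i))
    (hK : K = ∑ i, q i • Q i) (hkmax : ∀ i, k < i → p ∣ q i)
    (hA : addOrderOf (Q k) = p ^ A) {j : ℕ} (hAj : A ≤ j) : (j : ℕ∞) < nuP p Q (p ^ j • K) := by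
  have hrepr := hQ.isCanonicalRepr_nsmul hK (p ^ j)
  suffices h : ∀ i, p ^ (j + 1) ∣ p ^ j * q i % addOrderOf (Q i) by
    have hle := hQ.le_nuP_of_forall_dvd hrepr h
    exact (ENat.add_one_le_iff (ENat.natCast_ne_top j)).mp (by exact_mod_cast hle)
  intro i
  obtain ⟨a, ha⟩ := hQp i
  simp only [ha]
  rcases le_or_gt i k with hik | hki
  · have hai : p ^ a ∣ p ^ j := by
      have hle : p ^ a ≤ p ^ A := ha ▸ hA ▸ hQsorted hik
      exact pow_dvd_pow p (((Nat.pow_le_pow_iff_right hp.one_lt).mp hle).trans hAj)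
    rw [Nat.mod_eq_zero_of_dvd (hai.mul_right _)]
    exact dvd_zero _
  · refine Nat.pow_dvd_mod_pow_of_dvd ?_
    rw [pow_succ]
    exact mul_dvd_mul_left _ (hkmax i hki)

theorem IsBasis.nuP_pow_nsmul_eq_iff [LinearOrder ι] (hp : p.Prime) (hQ : IsBasis Q)
    (hQp : ∀ i, ∃ a, addOrderOf (Q i) = p ^ a) (hQsorted : Monotone fun i => addOrderOf (Q i))
    (hK : K = ∑ i, q i • Q i) (hk : ¬ p ∣ q k) (hkmax : ∀ i, k < i → p ∣ q i)
    (hA : addOrderOf (Q k) = p ^ A) (j : ℕ) : nuP p Q (p ^ j • K) = j ↔ j < A :=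
  ⟨fun h => not_le.mp fun hAj =>
      (hQ.lt_nuP_pow_nsmul_of_le hp hQp hQsorted hK hkmax hA hAj).ne' h,
    hQ.nuP_pow_nsmul_of_lt hp hQp hK hk hA⟩

end LastUnitCoefficient

end

theorem shuffle_theorem_general {G : Type*} [AddCommGroup G]
    {p : ℕ} (hp : p.Prime) (hG : ∀ g : G, ∃ k : ℕ, p ^ k • g = 0)
    {N : ℕ} (Q P : Fin N → G) (hQ : IsBasis Q) (hP : IsBasis P)
    (hQsorted : Monotone fun i => addOrderOf (Q i))
    (hPsorted : Monotone fun i => addOrderOf (P i))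
    (K₁ K₂ : G) (q m : Fin N → ℕ)
    (hK₁ : K₁ = ∑ i, q i • Q i)
    (hK₂ : K₂ = ∑ i, m i • P i)
    (e : ℕ) (hordK₁ : addOrderOf K₁ = p ^ e)
    (k : Fin N) (hk : ¬ p ∣ q k) (hkmax : ∀ i, k < i → p ∣ q i)
    (l : Fin N) (hl : ¬ p ∣ m l) (hlmax : ∀ i, l < i → p ∣ m i)
    (hnu : ∀ j : ℕ, j ≤ e → nuP p Q (p ^ j • K₁) = nuP p Q (p ^ j • K₂)) :
    addOrderOf (Q k) = addOrderOf (P l) := by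
  have := Fact.mk hp
  have hord_pow (g : G) : ∃ a, addOrderOf g = p ^ a :=
    exists_addOrderOf_eq_prime_pow_iff.mpr (hG g)
  obtain ⟨A, hA⟩ := hord_pow (Q k)
  obtain ⟨B, hB⟩ := hord_pow (P l)
  have hK₁nu := hQ.nuP_pow_nsmul_eq_iff hp (fun i => hord_pow (Q i)) hQsorted hK₁ hk hkmax hA
  have hK₂nu := hP.nuP_pow_nsmul_eq_iff hp (fun i => hord_pow (P i)) hPsorted hK₂ hl hlmax hB
  have hAe : A ≤ e := by
    refine not_lt.mp fun heA => ENat.top_ne_natCast e ?_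
    rw [← hQ.nuP_zero (p := p), ← addOrderOf_nsmul_eq_zero K₁, hordK₁]
    exact (hK₁nu e).mpr heA
  have hmin : min A B < A ↔ min A B < B := by
    rw [← hK₁nu, ← hK₂nu, hnu _ ((min_le_left A B).trans hAe),
      hQ.nuP_eq_nuP hP (fun i => hord_pow (Q i)) (fun i => hord_pow (P i))]
  rw [hA, hB, show A = B by omega]

/-- If the primitive elements `K₁ = ∑ q i • Q i` and `K₂ = ∑ m i • P i` (w.r.t. sorted bases
`Q`, `P`) satisfy `ν_p (p^j • K₁) = ν_p (p^j • K₂)` for all `0 ≤ j ≤ e` where `|K₁| = p ^ e`,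
and `k`, `l` are the largest indices with `p ∤ q k`, `p ∤ m l`, then `|Q k| = |P l|`. -/
theorem shuffle_theorem {G : Type*} [AddCommGroup G] [Fintype G]
    {p : ℕ} (hp : p.Prime) (hG : ∀ g : G, ∃ k : ℕ, p ^ k • g = 0)
    {N : ℕ} (Q P : Fin N → G) (hQ : IsBasis Q) (hP : IsBasis P)
    (hQsorted : Monotone fun i => addOrderOf (Q i))
    (hPsorted : Monotone fun i => addOrderOf (P i))
    (K₁ K₂ : G) (q m : Fin N → ℕ)
    (hqlt : ∀ i, q i < addOrderOf (Q i)) (hK₁ : K₁ = ∑ i, q i • Q i)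
    (hmlt : ∀ i, m i < addOrderOf (P i)) (hK₂ : K₂ = ∑ i, m i • P i)
    (e : ℕ) (hordK₁ : addOrderOf K₁ = p ^ e)
    (k : Fin N) (hk : ¬ p ∣ q k) (hkmax : ∀ i, k < i → p ∣ q i)
    (l : Fin N) (hl : ¬ p ∣ m l) (hlmax : ∀ i, l < i → p ∣ m i)
    (hnu : ∀ j : ℕ, j ≤ e → nuP p Q (p ^ j • K₁) = nuP p Q (p ^ j • K₂)) :
    addOrderOf (Q k) = addOrderOf (P l) :=
  shuffle_theorem_general hp hG Q P hQ hP hQsorted hPsorted K₁ K₂ q m hK₁ hK₂ e hordK₁ k hk hkmax l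
    hl hlmax hnu
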